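/- arXiv:1604.04961 — 4 statements merged into one kernel-verified Lean document; each statement's English description precedes it below -/
import Mathlib

section
/- Let K ≥ 2, M ≥ 1, N ≥ 1 be integers with K·M > N, and let i* = ⌊N/M⌋. Then the function f(p) = Σ_{i=i*+1}^{K} B_K(i)·(i·M - N), where B_K(i) = C(K,i) p^i (1-p)^{K-i}, is convex on [0,1], satisfies f(0) = 0 and f(1) = K·M - N, and its second derivative equals f''(p) = K(K-1)·[(N - i*·M)·B_{K-2}(i*) - (N - (i*+1)·M)·B_{K-2}(i*-1)], which is nonnegative on [0,1]. -/
noncomputable def binPMF (K : ℕ) (i : ℤ) (p : ℝ) : ℝ :=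
  if 0 ≤ i then (K.choose i.toNat : ℝ) * p ^ i.toNat * (1 - p) ^ (K - i.toNat) else 0

/-!
The Bernstein basis satisfies `B_{n+1}(i)' = (n+1) (B_n(i-1) - B_n(i))`, so by Abel summation the
derivative of a tail sum `∑_{i ≥ s} B_{n+1}(i) g(i)` is
`(n+1) (B_n(s-1) g(s) + ∑_{i ≥ s} B_n(i) (g(i+1) - g(i)))`. For the affine weight `g(i) = i M - N`
the differences are constant, so differentiating once more telescopes the tail away and leaves the
two boundary terms of `f''`; their signs come from `i* M ≤ N < (i* + 1) M`.
-/

open Finset Polynomial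

theorem binPMF_natCast (n ν : ℕ) (p : ℝ) :
    binPMF n ν p = (bernsteinPolynomial ℝ n ν).eval p := by
  simp [binPMF, bernsteinPolynomial]

theorem binPMF_of_neg (n : ℕ) {i : ℤ} (hi : i < 0) (p : ℝ) : binPMF n i p = 0 := by
  simp [binPMF, hi.not_ge]

theorem binPMF_of_lt {n : ℕ} {i : ℤ} (hi : n < i) (p : ℝ) : binPMF n i p = 0 := by
  lift i to ℕ using by omega
  rw [binPMF_natCast, bernsteinPolynomial.eq_zero_of_lt ℝ (by omega), eval_zero]

theorem binPMF_nonneg (n : ℕ) (i : ℤ) {p : ℝ} (hp : p ∈ Set.Icc 0 1) : 0 ≤ binPMF n i p := by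
  have hq : 0 ≤ 1 - p := sub_nonneg.2 hp.2
  unfold binPMF
  split_ifs
  · exact mul_nonneg (mul_nonneg (Nat.cast_nonneg _) (pow_nonneg hp.1 _)) (pow_nonneg hq _)
  · exact le_rfl

theorem hasDerivAt_binPMF (n : ℕ) (i : ℤ) (p : ℝ) :
    HasDerivAt (binPMF (n + 1) i) ((n + 1) * (binPMF n (i - 1) p - binPMF n i p)) p := by
  rcases lt_or_ge i 0 with hi | hi
  · have hzero : binPMF (n + 1) i = fun _ => 0 := funext (binPMF_of_neg _ hi)
    rw [hzero, binPMF_of_neg _ hi, binPMF_of_neg _ (by omega)]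
    simpa using hasDerivAt_const p (0 : ℝ)
  lift i to ℕ using hi
  have hpoly : binPMF (n + 1) i = fun q => (bernsteinPolynomial ℝ (n + 1) i).eval q :=
    funext (binPMF_natCast _ _)
  rw [hpoly]
  refine (Polynomial.hasDerivAt _ p).congr_deriv ?_
  cases i with
  | zero =>
    rw [bernsteinPolynomial.derivative_zero, Nat.add_sub_cancel, eval_mul, eval_neg,
      eval_natCast, ← binPMF_natCast, binPMF_of_neg n (by norm_num : ((0 : ℕ) : ℤ) - 1 < 0)]
    push_cast
    ring
  | succ ν =>
    rw [bernsteinPolynomial.derivative_succ, Nat.add_sub_cancel, eval_mul, eval_sub,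
      ← binPMF_natCast, ← binPMF_natCast]
    simp

theorem sum_Icc_sub_mul_by_parts {s m : ℕ} (hsm : s ≤ m) (B : ℤ → ℝ) (g : ℕ → ℝ) :
    ∑ i ∈ Icc s m, (B (i - 1) - B i) * g i
      = B (s - 1) * g s + ∑ i ∈ Ico s m, B i * (g (i + 1) - g i) - B m * g m := by
  induction m, hsm using Nat.le_induction with
  | base => simp [sub_mul]
  | succ m hsm ih =>
    rw [sum_Icc_succ_top (by omega), ih, sum_Ico_succ_top hsm]
    push_cast
    rw [add_sub_cancel_right]
    ring

theorem hasDerivAt_sum_Icc_binPMF_mul (n s : ℕ) (g : ℕ → ℝ) (p : ℝ) :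
    HasDerivAt (fun q => ∑ i ∈ Icc s (n + 1), binPMF (n + 1) i q * g i)
      ((n + 1) * (binPMF n ((s : ℤ) - 1) p * g s
        + ∑ i ∈ Icc s n, binPMF n i p * (g (i + 1) - g i))) p := by
  refine (HasDerivAt.fun_sum fun (i : ℕ) _ =>
    (hasDerivAt_binPMF n i p).mul_const (g i)).congr_deriv ?_
  simp_rw [mul_assoc, ← mul_sum]
  congr 1
  rcases le_or_gt s (n + 1) with hs | hs
  · rw [sum_Icc_sub_mul_by_parts hs (binPMF n · p), ← Ico_add_one_right_eq_Icc,
      binPMF_of_lt (i := ((n + 1 : ℕ) : ℤ)) (by omega), zero_mul, sub_zero]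
  · simp [Icc_eq_empty_of_lt hs, Icc_eq_empty_of_lt (show n < s by omega),
      binPMF_of_lt (show (n : ℤ) < s - 1 by omega)]

section AffineTail

variable (n k : ℕ) (a b : ℝ)

theorem hasDerivAt_sum_Icc_binPMF_mul_affine (p : ℝ) :
    HasDerivAt (fun q => ∑ i ∈ Icc (k + 1) (n + 2), binPMF (n + 2) i q * (i * a - b))
      ((n + 2) * (binPMF (n + 1) k p * ((k + 1) * a - b)
        + ∑ i ∈ Icc (k + 1) (n + 1), binPMF (n + 1) i p * a)) p := by
  refine (hasDerivAt_sum_Icc_binPMF_mul (n + 1) (k + 1) (fun i => i * a - b) p).congr_deriv ?_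
  have hstep (i : ℕ) : ((i + 1 : ℕ) : ℝ) * a - b - (i * a - b) = a := by push_cast; ring
  simp only [hstep]
  push_cast
  rw [add_sub_cancel_right]
  ring

theorem hasDerivAt_deriv_sum_Icc_binPMF_mul_affine (p : ℝ) :
    HasDerivAt (fun q => (n + 2) * (binPMF (n + 1) k q * ((k + 1) * a - b)
        + ∑ i ∈ Icc (k + 1) (n + 1), binPMF (n + 1) i q * a))
      ((n + 2) * (n + 1) * ((b - k * a) * binPMF n k p
        - (b - (k + 1) * a) * binPMF n ((k : ℤ) - 1) p)) p := by
  refine ((((hasDerivAt_binPMF n k p).mul_const _).add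
    (hasDerivAt_sum_Icc_binPMF_mul n (k + 1) (fun _ => a) p)).const_mul _).congr_deriv ?_
  push_cast
  simp only [add_sub_cancel_right, sub_self, mul_zero, sum_const_zero, add_zero]
  ring

end AffineTail

theorem iteratedDeriv_two_eq_of_hasDerivAt {𝕜 F : Type*} [NontriviallyNormedField 𝕜]
    [NormedAddCommGroup F] [NormedSpace 𝕜 F] {f f' f'' : 𝕜 → F}
    (hf : ∀ x, HasDerivAt f (f' x) x) (hf' : ∀ x, HasDerivAt f' (f'' x) x) :
    iteratedDeriv 2 f = f'' := by
  rw [iteratedDeriv_succ, iteratedDeriv_one, funext fun x => (hf x).deriv]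
  exact funext fun x => (hf' x).deriv

theorem convexOn_of_hasDerivAt2_nonneg {D : Set ℝ} (hD : Convex ℝ D) {f f' f'' : ℝ → ℝ}
    (hf : ∀ x, HasDerivAt f (f' x) x) (hf' : ∀ x, HasDerivAt f' (f'' x) x)
    (hf''₀ : ∀ x ∈ D, 0 ≤ f'' x) : ConvexOn ℝ D f :=
  convexOn_of_hasDerivWithinAt2_nonneg hD (fun x _ => (hf x).continuousAt.continuousWithinAt)
    (fun x _ => (hf x).hasDerivWithinAt) (fun x _ => (hf' x).hasDerivWithinAt)
    fun x hx => hf''₀ x (interior_subset hx)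

theorem reception_gain_convex_general (K M N : ℕ) (hK : 2 ≤ K)
    (h : N < K * M) :
    let istar := N / M
    let f : ℝ → ℝ := fun p =>
      ∑ i ∈ Finset.Icc (istar + 1) K, binPMF K (i : ℤ) p * ((i : ℝ) * M - N)
    ConvexOn ℝ (Set.Icc (0:ℝ) 1) f ∧ f 0 = 0 ∧ f 1 = (K : ℝ) * M - N ∧
    ∀ p ∈ Set.Icc (0:ℝ) 1,
      iteratedDeriv 2 f p
        = (K : ℝ) * ((K : ℝ) - 1) *
            (((N : ℝ) - (istar : ℝ) * M) * binPMF (K-2) (istar : ℤ) p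
              - ((N : ℝ) - ((istar : ℝ) + 1) * M) * binPMF (K-2) ((istar : ℤ) - 1) p) ∧
      0 ≤ iteratedDeriv 2 f p := by
  intro istar f
  obtain ⟨n, rfl⟩ : ∃ n, K = n + 2 := ⟨K - 2, by omega⟩
  have hM : 0 < M := Nat.pos_of_ne_zero (by rintro rfl; simp at h)
  have histar_le : (istar : ℝ) * M ≤ N := by exact_mod_cast Nat.div_mul_le_self N M
  have hlt_istar : (N : ℝ) < (istar + 1) * M := by
    exact_mod_cast (Nat.lt_div_mul_add hM).trans_eq (by ring)
  have histar_lt : istar < n + 2 := (Nat.div_lt_iff_lt_mul hM).2 h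
  have hf := hasDerivAt_sum_Icc_binPMF_mul_affine n istar M N
  have hf' := hasDerivAt_deriv_sum_Icc_binPMF_mul_affine n istar M N
  have hf'' := iteratedDeriv_two_eq_of_hasDerivAt hf hf'
  have hf''_nonneg : ∀ p ∈ Set.Icc (0 : ℝ) 1, 0 ≤ iteratedDeriv 2 f p := by
    intro p hp
    have hpos : 0 ≤ ((N : ℝ) - istar * M) * binPMF n istar p :=
      mul_nonneg (by linarith) (binPMF_nonneg n istar hp)
    have hneg : ((N : ℝ) - (istar + 1) * M) * binPMF n ((istar : ℤ) - 1) p ≤ 0 :=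
      mul_nonpos_of_nonpos_of_nonneg (by linarith) (binPMF_nonneg n _ hp)
    rw [hf'']
    exact mul_nonneg (by positivity) (by linarith)
  refine ⟨convexOn_of_hasDerivAt2_nonneg (convex_Icc 0 1) hf hf' ?_, ?_, ?_,
    fun p hp => ⟨?_, hf''_nonneg p hp⟩⟩
  · exact fun p hp => congrFun hf'' p ▸ hf''_nonneg p hp
  · refine sum_eq_zero fun i hi => ?_
    rw [binPMF_natCast, bernsteinPolynomial.eval_at_0, if_neg (by grind), zero_mul]
  · dsimp only [f]
    rw [sum_eq_single_of_mem (n + 2) (mem_Icc.2 ⟨histar_lt, le_rfl⟩)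
      fun i _ hi => by rw [binPMF_natCast, bernsteinPolynomial.eval_at_1, if_neg hi, zero_mul],
      binPMF_natCast, bernsteinPolynomial.eval_at_1, if_pos rfl, one_mul]
  · rw [hf'', Nat.add_sub_cancel]
    push_cast
    ring

theorem reception_gain_convex (K M N : ℕ) (hK : 2 ≤ K) (hM : 1 ≤ M) (hN : 1 ≤ N)
    (h : N < K * M) :
    let istar := N / M
    let f : ℝ → ℝ := fun p =>
      ∑ i ∈ Finset.Icc (istar + 1) K, binPMF K (i : ℤ) p * ((i : ℝ) * M - N)
    ConvexOn ℝ (Set.Icc (0:ℝ) 1) f ∧ f 0 = 0 ∧ f 1 = (K : ℝ) * M - N ∧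
    ∀ p ∈ Set.Icc (0:ℝ) 1,
      iteratedDeriv 2 f p
        = (K : ℝ) * ((K : ℝ) - 1) *
            (((N : ℝ) - (istar : ℝ) * M) * binPMF (K-2) (istar : ℤ) p
              - ((N : ℝ) - ((istar : ℝ) + 1) * M) * binPMF (K-2) ((istar : ℤ) - 1) p) ∧
      0 ≤ iteratedDeriv 2 f p :=
  reception_gain_convex_general K M N hK h
end

section
/- Let K ≥ 2, M ≥ 1, N ≥ 1 be integers with K·M > N, and let i* = ⌊N/M⌋. Then for all p ∈ (0,1), Σ_{i=i*+1}^{K} B_K(i)·(i·M - N) < p·(K·M - N), where B_K(i) = C(K,i) p^i (1-p)^{K-i}. -/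
/-!
The positive part `x ↦ max (x * M - N) 0` is convex, vanishes at `x = 0` and equals `K * M - N` at
`x = K`, so on `[0, K]` it lies below the chord `x ↦ x / K * (K * M - N)`, strictly at `x = 1` because
`N > 0` and `1 < K`. With binomial weights `B i`, the relaying gain is at most
`∑ B i * max (i * M - N) 0`, and averaging the chord against these weights gives `p * (K * M - N)`,
since the binomial mean is `K * p`.
-/

open Finset

lemma binPMF_natCast_s10 (K i : ℕ) (p : ℝ) :
    binPMF K i p = K.choose i * p ^ i * (1 - p) ^ (K - i) := by
  simp [binPMF]

lemma binPMF_natCast_pos {K i : ℕ} (hi : i ≤ K) {p : ℝ} (hp : p ∈ Set.Ioo (0 : ℝ) 1) :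
    0 < binPMF K i p := by
  have hq : 0 < 1 - p := sub_pos.mpr hp.2
  have := hp.1
  have : (0 : ℝ) < K.choose i := by exact_mod_cast Nat.choose_pos hi
  rw [binPMF_natCast_s10]
  positivity

lemma sum_range_mul_binPMF (K : ℕ) (p : ℝ) :
    ∑ i ∈ range (K + 1), (i : ℝ) * binPMF K i p = K * p := by
  have := congrArg (Polynomial.eval p) (bernsteinPolynomial.sum_smul ℝ K)
  simpa [Polynomial.eval_finsetSum, bernsteinPolynomial, binPMF_natCast_s10, mul_assoc] using this

lemma max_mul_sub_le_chord {x m n K : ℝ} (hx : 0 ≤ x) (hxK : x ≤ K) (hK : 0 < K) (hn : 0 ≤ n)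
    (hnK : n ≤ K * m) : max (x * m - n) 0 ≤ x / K * (K * m - n) := by
  have hchord : x / K * (K * m - n) = x * m - x / K * n := by field_simp
  refine max_le ?_ (mul_nonneg (div_nonneg hx hK.le) (sub_nonneg.mpr hnK))
  linarith [mul_le_of_le_one_left hn (div_le_one_of_le₀ hxK hK.le)]

lemma max_mul_sub_lt_chord {x m n K : ℝ} (hx : 0 < x) (hxK : x < K) (hn : 0 < n)
    (hnK : n < K * m) : max (x * m - n) 0 < x / K * (K * m - n) := by
  have hK : 0 < K := hx.trans hxK
  have hchord : x / K * (K * m - n) = x * m - x / K * n := by field_simp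
  refine max_lt ?_ (mul_pos (div_pos hx hK) (sub_pos.mpr hnK))
  linarith [mul_lt_of_lt_one_left hn ((div_lt_one hK).mpr hxK)]

lemma sum_mul_le_sum_mul_max_zero {ι : Type*} {s t : Finset ι} (hst : s ⊆ t) (w f : ι → ℝ)
    (hw : ∀ i ∈ t, 0 ≤ w i) : ∑ i ∈ s, w i * f i ≤ ∑ i ∈ t, w i * max (f i) 0 :=
  calc ∑ i ∈ s, w i * f i ≤ ∑ i ∈ s, w i * max (f i) 0 :=
        sum_le_sum fun i hi => mul_le_mul_of_nonneg_left (le_max_left _ _) (hw i (hst hi))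
    _ ≤ ∑ i ∈ t, w i * max (f i) 0 :=
        sum_le_sum_of_subset_of_nonneg hst fun i hi _ => mul_nonneg (hw i hi) (le_max_right _ _)

theorem reception_gain_lt_chord_general (K M N : ℕ) (hK : 2 ≤ K) (hN : 1 ≤ N)
    (h : N < K * M) (p : ℝ) (hp : p ∈ Set.Ioo (0:ℝ) 1) :
    ∑ i ∈ Finset.Icc (N / M + 1) K, binPMF K (i : ℤ) p * ((i : ℝ) * M - N)
      < p * ((K : ℝ) * M - N) := by
  have hw : ∀ i ∈ range (K + 1), 0 < binPMF K i p := fun i hi =>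
    binPMF_natCast_pos (Nat.lt_succ_iff.mp (mem_range.mp hi)) hp
  have hKpos : (0 : ℝ) < K := by positivity
  have hNKM : (N : ℝ) < K * M := by exact_mod_cast h
  have hsub : Icc (N / M + 1) K ⊆ range (K + 1) := fun i hi => by
    simp only [mem_Icc, mem_range] at hi ⊢; omega
  have hone : 1 ∈ range (K + 1) := mem_range.mpr (by omega)
  calc ∑ i ∈ Icc (N / M + 1) K, binPMF K i p * ((i : ℝ) * M - N)
      ≤ ∑ i ∈ range (K + 1), binPMF K i p * max ((i : ℝ) * M - N) 0 :=
        sum_mul_le_sum_mul_max_zero hsub _ _ fun i hi => (hw i hi).le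
    _ < ∑ i ∈ range (K + 1), binPMF K i p * ((i : ℝ) / K * (K * M - N)) := by
        refine sum_lt_sum (fun i hi => mul_le_mul_of_nonneg_left ?_ (hw i hi).le)
          ⟨1, hone, mul_lt_mul_of_pos_left ?_ (hw 1 hone)⟩
        · have : (i : ℝ) ≤ K := by exact_mod_cast Nat.lt_succ_iff.mp (mem_range.mp hi)
          exact max_mul_sub_le_chord (by positivity) this hKpos (by positivity) hNKM.le
        · exact max_mul_sub_lt_chord (by norm_num) (by exact_mod_cast hK) (by exact_mod_cast hN)
            (by exact_mod_cast h)
    _ = (∑ i ∈ range (K + 1), (i : ℝ) * binPMF K i p) / K * (K * M - N) := by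
        rw [sum_div, sum_mul]
        exact sum_congr rfl fun i _ => by ring
    _ = p * (K * M - N) := by rw [sum_range_mul_binPMF, mul_div_cancel_left₀ p hKpos.ne']

theorem reception_gain_lt_chord (K M N : ℕ) (hK : 2 ≤ K) (hM : 1 ≤ M) (hN : 1 ≤ N)
    (h : N < K * M) (p : ℝ) (hp : p ∈ Set.Ioo (0:ℝ) 1) :
    ∑ i ∈ Finset.Icc (N / M + 1) K, binPMF K (i : ℤ) p * ((i : ℝ) * M - N)
      < p * ((K : ℝ) * M - N) :=
  reception_gain_lt_chord_general K M N hK hN h p hp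
end

section
/- Let K ≥ 2, M ≥ 1, N ≥ 1 with K·M > N and i* = ⌊N/M⌋. Then the function h(p) = Σ_{i=0}^{i*} B_K(i)·(N - i·M) is convex on [0,1], satisfies h(0) = N and h(1) = 0, and for all p ∈ (0,1), h(p) < (1-p)·N. -/
open Polynomial

lemma bern_deriv_sum (n : ℕ) (d : ℕ → ℝ) :
    Polynomial.derivative (∑ i ∈ Finset.range (n+2), Polynomial.C (d i) * bernsteinPolynomial ℝ (n+1) i)
    = Polynomial.C ((n:ℝ)+1) * ∑ i ∈ Finset.range (n+1), Polynomial.C (d (i+1) - d i) * bernsteinPolynomial ℝ n i := by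
  rw [map_sum]
  have key : ∀ i, Polynomial.derivative (Polynomial.C (d i) * bernsteinPolynomial ℝ (n+1) i)
      = Polynomial.C (d i) * Polynomial.derivative (bernsteinPolynomial ℝ (n+1) i) := by
    intro i; rw [Polynomial.derivative_C_mul]
  simp_rw [key]
  rw [Finset.sum_range_succ' _ (n+1)]
  have h0 : Polynomial.derivative (bernsteinPolynomial ℝ (n+1) 0)
      = -((n:ℝ[X])+1) * bernsteinPolynomial ℝ n 0 := by
    have := bernsteinPolynomial.derivative_zero ℝ (n+1)
    simpa using this
  have hs : ∀ i, Polynomial.derivative (bernsteinPolynomial ℝ (n+1) (i+1))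
      = ((n:ℝ[X])+1) * (bernsteinPolynomial ℝ n i - bernsteinPolynomial ℝ n (i+1)) := by
    intro i
    have := bernsteinPolynomial.derivative_succ ℝ (n+1) i
    simpa using this
  rw [h0]
  simp_rw [hs]
  have shift : ∑ i ∈ Finset.range (n+1), Polynomial.C (d (i+1)) * bernsteinPolynomial ℝ n (i+1)
      = ∑ i ∈ Finset.range (n+1), Polynomial.C (d i) * bernsteinPolynomial ℝ n i
        - Polynomial.C (d 0) * bernsteinPolynomial ℝ n 0 := by
    have h1 : ∑ i ∈ Finset.range (n+2), Polynomial.C (d i) * bernsteinPolynomial ℝ n i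
        = ∑ i ∈ Finset.range (n+1), Polynomial.C (d (i+1)) * bernsteinPolynomial ℝ n (i+1)
          + Polynomial.C (d 0) * bernsteinPolynomial ℝ n 0 := Finset.sum_range_succ' _ (n+1)
    have h2 : ∑ i ∈ Finset.range (n+2), Polynomial.C (d i) * bernsteinPolynomial ℝ n i
        = ∑ i ∈ Finset.range (n+1), Polynomial.C (d i) * bernsteinPolynomial ℝ n i
          + Polynomial.C (d (n+1)) * bernsteinPolynomial ℝ n (n+1) := Finset.sum_range_succ _ (n+1)
    rw [bernsteinPolynomial.eq_zero_of_lt ℝ (Nat.lt_succ_self n)] at h2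
    simp at h2
    rw [h2] at h1
    rw [h1]; ring
  rw [Finset.mul_sum]
  have expand : ∀ i ∈ Finset.range (n+1),
      Polynomial.C ((n:ℝ)+1) * (Polynomial.C (d (i+1) - d i) * bernsteinPolynomial ℝ n i)
      = ((n:ℝ[X])+1) * (Polynomial.C (d (i+1)) * bernsteinPolynomial ℝ n i
          - Polynomial.C (d i) * bernsteinPolynomial ℝ n i) := by
    intro i _
    rw [Polynomial.C_sub]
    have hc : Polynomial.C ((n:ℝ)+1) = ((n:ℝ[X])+1) := by simp
    rw [hc]; ring
  rw [Finset.sum_congr rfl expand]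
  have lhs_expand : ∀ i ∈ Finset.range (n+1),
      Polynomial.C (d (i+1)) * (((n:ℝ[X])+1) * (bernsteinPolynomial ℝ n i - bernsteinPolynomial ℝ n (i+1)))
      = ((n:ℝ[X])+1) * (Polynomial.C (d (i+1)) * bernsteinPolynomial ℝ n i
          - Polynomial.C (d (i+1)) * bernsteinPolynomial ℝ n (i+1)) := by
    intro i _; ring
  rw [Finset.sum_congr rfl lhs_expand]
  rw [← Finset.mul_sum, ← Finset.mul_sum]
  simp_rw [Finset.sum_sub_distrib]
  rw [shift]
  ring

lemma bern_eval (n ν : ℕ) (p : ℝ) :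
    (bernsteinPolynomial ℝ n ν).eval p = (n.choose ν : ℝ) * p ^ ν * (1 - p) ^ (n - ν) := by
  simp [bernsteinPolynomial]

lemma bern_eval_nonneg (n ν : ℕ) {p : ℝ} (h0 : 0 ≤ p) (h1 : p ≤ 1) :
    0 ≤ (bernsteinPolynomial ℝ n ν).eval p := by
  rw [bern_eval]
  have : (0:ℝ) ≤ 1 - p := by linarith
  positivity

lemma bern_sum_eval (n : ℕ) (p : ℝ) :
    ∑ i ∈ Finset.range (n+1), (bernsteinPolynomial ℝ n i).eval p = 1 := by
  have h := bernsteinPolynomial.sum ℝ n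
  have := congrArg (Polynomial.eval p) h
  simpa [Polynomial.eval_finset_sum] using this

lemma bern_sum_smul_eval (n : ℕ) (p : ℝ) :
    ∑ i ∈ Finset.range (n+1), (i:ℝ) * (bernsteinPolynomial ℝ n i).eval p = n * p := by
  have h := bernsteinPolynomial.sum_smul ℝ n
  have := congrArg (Polynomial.eval p) h
  simpa [Polynomial.eval_finset_sum, mul_comm] using this

theorem transmission_gain_convex (K M N : ℕ) (hK : 2 ≤ K) (hM : 1 ≤ M) (hN : 1 ≤ N)
    (h : N < K * M) :
    let istar := N / M
    let g : ℝ → ℝ := fun p =>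
      ∑ i ∈ Finset.range (istar + 1), binPMF K (i : ℤ) p * ((N : ℝ) - (i : ℝ) * M)
    ConvexOn ℝ (Set.Icc (0:ℝ) 1) g ∧ g 0 = (N : ℝ) ∧ g 1 = 0 ∧
    ∀ p ∈ Set.Ioo (0:ℝ) 1, g p < (1 - p) * N := by
  intro istar g
  obtain ⟨k, rfl⟩ : ∃ k, K = k + 2 := ⟨K - 2, by omega⟩
  have hM0 : 0 < M := hM
  have histar : istar < k + 2 := by
    rw [Nat.div_lt_iff_lt_mul hM0]
    exact h
  set c : ℕ → ℝ := fun i => if i ≤ istar then (N:ℝ) - i*M else 0 with hc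
  set P : ℝ[X] := ∑ i ∈ Finset.range (k+3), Polynomial.C (c i) * bernsteinPolynomial ℝ (k+2) i with hP
  -- g is evaluation of P
  have hg : g = fun p => P.eval p := by
    funext p
    show ∑ i ∈ Finset.range (istar + 1), binPMF (k+2) (i : ℤ) p * ((N : ℝ) - (i : ℝ) * M)
        = P.eval p
    rw [hP, Polynomial.eval_finset_sum]
    rw [← Finset.sum_subset (Finset.range_subset_range.2 (by omega : istar + 1 ≤ k + 3))
      (by
        intro i hi hni
        have : ¬ i ≤ istar := by
          simp only [Finset.mem_range] at hni
          omega
        simp [hc, this])]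
    apply Finset.sum_congr rfl
    intro i hi
    have hile : i ≤ istar := by
      simp only [Finset.mem_range] at hi; omega
    simp only [Polynomial.eval_mul, Polynomial.eval_C, bern_eval, hc, if_pos hile, binPMF]
    rw [if_pos (by positivity : (0:ℤ) ≤ (i:ℤ))]
    simp only [Int.toNat_natCast]
    ring
  -- second derivative of P
  have hP1 : Polynomial.derivative P
      = Polynomial.C ((k:ℝ)+2) * ∑ i ∈ Finset.range (k+2),
          Polynomial.C (c (i+1) - c i) * bernsteinPolynomial ℝ (k+1) i := by
    rw [hP, show k+3 = (k+1)+2 from rfl, bern_deriv_sum (k+1) c,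
      show (((k+1:ℕ):ℝ)+1) = ((k:ℝ)+2) by push_cast; ring]
  have hP2 : Polynomial.derivative (Polynomial.derivative P)
      = Polynomial.C ((k:ℝ)+2) * (Polynomial.C ((k:ℝ)+1) * ∑ i ∈ Finset.range (k+1),
          Polynomial.C ((c (i+2) - c (i+1)) - (c (i+1) - c i)) * bernsteinPolynomial ℝ k i) := by
    rw [hP1, Polynomial.derivative_C_mul]
    have := bern_deriv_sum k (fun i => c (i+1) - c i)
    rw [this]
  -- the second differences are nonnegative
  have hdm := Nat.div_add_mod N M
  have hmlt := Nat.mod_lt N hM0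
  have h1 : (istar:ℝ) * M ≤ N := by
    have : istar * M ≤ N := Nat.div_mul_le_self N M
    exact_mod_cast this
  have h2 : (N:ℝ) < ((istar:ℝ) + 1) * M := by
    have hlt : N < (istar + 1) * M := by
      calc N = M * istar + N % M := (hdm).symm
        _ < M * istar + M := Nat.add_lt_add_left hmlt _
        _ = (istar + 1) * M := by ring
    exact_mod_cast hlt
  have he : ∀ i, 0 ≤ (c (i+2) - c (i+1)) - (c (i+1) - c i) := by
    intro i
    simp only [hc]
    by_cases hA : i + 2 ≤ istar
    · rw [if_pos hA, if_pos (by omega : i + 1 ≤ istar), if_pos (by omega : i ≤ istar)]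
      push_cast; ring_nf; nlinarith [le_refl (0:ℝ)]
    · by_cases hB : i + 1 ≤ istar
      · have hi1 : istar = i + 1 := by omega
        rw [if_neg hA, if_pos hB, if_pos (by omega : i ≤ istar)]
        rw [hi1] at h2
        push_cast at h2 ⊢
        nlinarith [h2]
      · by_cases hC : i ≤ istar
        · have hi0 : istar = i := by omega
          rw [if_neg hA, if_neg hB, if_pos hC]
          rw [hi0] at h1
          push_cast at h1 ⊢
          nlinarith [h1]
        · rw [if_neg hA, if_neg hB, if_neg hC]
          norm_num
  -- second derivative nonneg on Ioo
  have hderiv1 : deriv g = fun x => (Polynomial.derivative P).eval x := by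
    funext x
    rw [hg]
    exact Polynomial.deriv P
  have hd2 : ∀ x ∈ Set.Ioo (0:ℝ) 1, 0 ≤ deriv^[2] g x := by
    intro x hx
    have : deriv^[2] g x = (Polynomial.derivative (Polynomial.derivative P)).eval x := by
      show deriv (deriv g) x = _
      rw [hderiv1]
      exact Polynomial.deriv _
    rw [this, hP2]
    simp only [Polynomial.eval_mul, Polynomial.eval_C, Polynomial.eval_finset_sum]
    apply mul_nonneg (by positivity)
    apply mul_nonneg (by positivity)
    apply Finset.sum_nonneg
    intro i _
    exact mul_nonneg (he i) (bern_eval_nonneg _ _ hx.1.le hx.2.le)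
  have hconv : ConvexOn ℝ (Set.Icc (0:ℝ) 1) g := by
    apply convexOn_of_deriv2_nonneg (convex_Icc 0 1)
    · rw [hg]; exact (Polynomial.continuous P).continuousOn
    · rw [hg]; exact (Polynomial.differentiable P).differentiableOn
    · rw [hderiv1]
      exact (Polynomial.differentiable _).differentiableOn
    · intro x hx
      rw [interior_Icc] at hx
      exact hd2 x hx
  refine ⟨hconv, ?_, ?_, ?_⟩
  -- g 0 = N
  · rw [hg]
    show Polynomial.eval 0 P = (N:ℝ)
    rw [hP, Polynomial.eval_finset_sum]
    rw [Finset.sum_eq_single_of_mem 0 (by simp)]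
    · simp [hc, bern_eval]
    · intro i _ hi0
      simp only [Polynomial.eval_mul, Polynomial.eval_C, bern_eval]
      rw [zero_pow hi0]
      ring
  -- g 1 = 0
  · rw [hg]
    show Polynomial.eval 1 P = 0
    rw [hP, Polynomial.eval_finset_sum]
    apply Finset.sum_eq_zero
    intro i hi
    simp only [Polynomial.eval_mul, Polynomial.eval_C, bern_eval]
    by_cases hik : i ≤ istar
    · have : k + 2 - i ≠ 0 := by omega
      rw [show (1:ℝ) - 1 = 0 by ring, zero_pow this]
      ring
    · simp [hc, if_neg hik]
  -- strict inequality
  · intro p hp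
    obtain ⟨hp0, hp1⟩ := hp
    have hK0 : (0:ℝ) < (k:ℝ) + 2 := by positivity
    set ell : ℕ → ℝ := fun i => (N:ℝ) - (i:ℝ) * ((N:ℝ) / ((k:ℝ)+2)) with hell
    have hNKM : (N:ℝ) < ((k:ℝ)+2) * M := by exact_mod_cast h
    have hdivM : (N:ℝ) / ((k:ℝ)+2) < M := by
      rw [div_lt_iff₀ hK0]; nlinarith
    have hline : (1-p) * N = ∑ i ∈ Finset.range (k+3),
        ell i * (bernsteinPolynomial ℝ (k+2) i).eval p := by
      simp only [hell, sub_mul]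
      rw [Finset.sum_sub_distrib]
      rw [← Finset.mul_sum]
      have e1 : ∑ i ∈ Finset.range (k+3), (bernsteinPolynomial ℝ (k+2) i).eval p = 1 :=
        bern_sum_eval (k+2) p
      have e2 : ∑ i ∈ Finset.range (k+3), (i:ℝ) * (bernsteinPolynomial ℝ (k+2) i).eval p
          = ((k:ℝ)+2) * p := by
        have := bern_sum_smul_eval (k+2) p
        push_cast at this ⊢
        convert this using 2 <;> norm_num
      have e2' : ∑ i ∈ Finset.range (k+3),
          (i:ℝ) * ((N:ℝ) / ((k:ℝ)+2)) * (bernsteinPolynomial ℝ (k+2) i).eval p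
          = ((N:ℝ) / ((k:ℝ)+2)) * (((k:ℝ)+2) * p) := by
        rw [← e2, Finset.mul_sum]
        apply Finset.sum_congr rfl
        intro i _; ring
      rw [e1, e2']
      field_simp
    have hgp : g p = ∑ i ∈ Finset.range (k+3), c i * (bernsteinPolynomial ℝ (k+2) i).eval p := by
      rw [hg]
      show Polynomial.eval p P = _
      rw [hP, Polynomial.eval_finset_sum]
      apply Finset.sum_congr rfl
      intro i _
      simp
    rw [hgp, hline]
    apply Finset.sum_lt_sum
    · intro i hi
      simp only [Finset.mem_range] at hi
      apply mul_le_mul_of_nonneg_right _ (bern_eval_nonneg _ _ hp0.le hp1.le)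
      simp only [hc, hell]
      by_cases hik : i ≤ istar
      · rw [if_pos hik]
        have : (i:ℝ) * ((N:ℝ) / ((k:ℝ)+2)) ≤ (i:ℝ) * M :=
          mul_le_mul_of_nonneg_left hdivM.le (by positivity)
        linarith
      · rw [if_neg hik]
        have hiK : (i:ℝ) ≤ (k:ℝ) + 2 := by exact_mod_cast Nat.lt_succ_iff.mp hi
        have : (i:ℝ) * ((N:ℝ) / ((k:ℝ)+2)) ≤ ((k:ℝ)+2) * ((N:ℝ) / ((k:ℝ)+2)) :=
          mul_le_mul_of_nonneg_right hiK (by positivity)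
        have hfull : ((k:ℝ)+2) * ((N:ℝ) / ((k:ℝ)+2)) = N := by field_simp
        linarith
    · refine ⟨1, by simp, ?_⟩
      apply mul_lt_mul_of_pos_right
      · simp only [hc, hell]
        have hN1 : (1:ℝ) ≤ (N:ℝ) := by exact_mod_cast hN
        by_cases h1i : 1 ≤ istar
        · rw [if_pos h1i]
          push_cast
          linarith
        · rw [if_neg h1i]
          push_cast
          have : (N:ℝ) / ((k:ℝ)+2) < N := by
            rw [div_lt_iff₀ hK0]; nlinarith
          linarith
      · rw [bern_eval]
        have h1p : (0:ℝ) < 1 - p := by linarith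
        have hch : (0:ℝ) < ((k+2).choose 1 : ℝ) := by
          rw [Nat.choose_one_right]; positivity
        positivity
end

section
/- For every integer K ≥ 2, the function p ↦ min(K·p, 1) - (1 - (1-p)^K) on [0,1] attains its maximum at p = 1/K, with maximum value (1 - 1/K)^K. -/
lemma pow_sub_pow_le_n_mul (n : ℕ) (a b : ℝ) (ha : 0 ≤ a) (hab : a ≤ b) (hb : b ≤ 1) :
    b ^ n - a ^ n ≤ n * (b - a) := by
  induction n with
  | zero => simp
  | succ n ih =>
    have hbn : b ^ n ≤ 1 := pow_le_one₀ (ha.trans hab) hb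
    have han : a ^ n ≤ b ^ n := pow_le_pow_left₀ ha hab n
    have h2 : a ^ n ≤ 1 := pow_le_one₀ ha (hab.trans hb)
    have key : b ^ (n+1) = b * b ^ n := by ring
    have key2 : a ^ (n+1) = a * a ^ n := by ring
    push_cast
    nlinarith [ih, mul_le_mul_of_nonneg_right hb (sub_nonneg.mpr han),
      mul_le_mul_of_nonneg_left h2 (sub_nonneg.mpr hab)]

theorem ind_peak_gain (K : ℕ) (hK : 2 ≤ K) :
    (∀ p ∈ Set.Icc (0:ℝ) 1,
      min ((K : ℝ) * p) 1 - (1 - (1 - p) ^ K)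
        ≤ min ((K : ℝ) * (1/(K:ℝ))) 1 - (1 - (1 - 1/(K:ℝ)) ^ K)) ∧
    min ((K : ℝ) * (1/(K:ℝ))) 1 - (1 - (1 - 1/(K:ℝ)) ^ K) = (1 - 1/(K:ℝ)) ^ K := by
  have hKpos : (0:ℝ) < K := by exact_mod_cast (by omega : 0 < K)
  have hKinv : (K:ℝ) * (1/(K:ℝ)) = 1 := by field_simp
  have hq0 : (0:ℝ) ≤ 1 - 1/(K:ℝ) := by
    have : 1/(K:ℝ) ≤ 1 := by
      rw [div_le_one hKpos]; exact_mod_cast (by omega : 1 ≤ K)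
    linarith
  constructor
  · intro p hp
    obtain ⟨hp0, hp1⟩ := hp
    rw [hKinv, min_self]
    by_cases hc : p ≤ 1/(K:ℝ)
    · have hmin : min ((K:ℝ) * p) 1 = (K:ℝ) * p := by
        apply min_eq_left
        calc (K:ℝ) * p ≤ (K:ℝ) * (1/(K:ℝ)) :=
              mul_le_mul_of_nonneg_left hc hKpos.le
          _ = 1 := hKinv
      rw [hmin]
      have hle : (1 - p) ^ K - (1 - 1/(K:ℝ)) ^ K ≤ K * ((1 - p) - (1 - 1/(K:ℝ))) :=
        pow_sub_pow_le_n_mul K _ _ hq0 (by linarith) (by linarith)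
      have : (K:ℝ) * ((1 - p) - (1 - 1/(K:ℝ))) = 1 - K * p := by
        field_simp; ring
      linarith [this ▸ hle]
    · push_neg at hc
      have h1 : min ((K:ℝ) * p) 1 ≤ 1 := min_le_right _ _
      have h2 : (1 - p) ^ K ≤ (1 - 1/(K:ℝ)) ^ K :=
        pow_le_pow_left₀ (by linarith) (by linarith) K
      linarith
  · rw [hKinv, min_self]; ring
end
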